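/- arXiv:1002.4489 — 5 statements merged into one kernel-verified Lean document; each statement's English description precedes it below -/
import Mathlib

section
/- A map Γ : ℝ≥0^n → ℝ≥0^n is MAX-preserving (i.e., non-decreasing with respect to the componentwise partial order and satisfying Γ(MAX{x,y}) = MAX{Γ(x),Γ(y)} for all x,y, where MAX is taken componentwise) if and only if there exist non-decreasing functions γ_{i,j} : ℝ≥0 → ℝ≥0 for i,j = 1,…,n such that Γ_i(x) = max_{j=1,…,n} γ_{i,j}(x_j) for all x ∈ ℝ≥0^n and all i. -/
open scoped NNReal

/-- A map `Γ : ℝ≥0ⁿ → ℝ≥0ⁿ` is MAX-preserving iff it is non-decreasing and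
preserves componentwise maxima. -/
def MaxPreserving {n : ℕ} (Γ : (Fin n → ℝ≥0) → (Fin n → ℝ≥0)) : Prop :=
  Monotone Γ ∧ ∀ x y : Fin n → ℝ≥0, Γ (x ⊔ y) = Γ x ⊔ Γ y

private lemma sup_comm_aux {n : ℕ} {Γ : (Fin n → ℝ≥0) → (Fin n → ℝ≥0)}
    (hs : ∀ x y : Fin n → ℝ≥0, Γ (x ⊔ y) = Γ x ⊔ Γ y)
    {α : Type*} (s : Finset α) (hne : s.Nonempty) (f : α → Fin n → ℝ≥0) :
    Γ (s.sup f) = s.sup (fun a => Γ (f a)) := by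
  induction hne using Finset.Nonempty.cons_induction with
  | singleton a => simp
  | cons a s ha hne ih =>
      rw [Finset.sup_cons, Finset.sup_cons, hs, ih]

theorem maxPreserving_iff_exists_gains {n : ℕ} (hn : 0 < n)
    (Γ : (Fin n → ℝ≥0) → (Fin n → ℝ≥0)) :
    MaxPreserving Γ ↔
      ∃ γ : Fin n → Fin n → ℝ≥0 → ℝ≥0,
        (∀ i j, Monotone (γ i j)) ∧
        ∀ x : Fin n → ℝ≥0, ∀ i : Fin n,
          Γ x i = Finset.univ.sup (fun j : Fin n => γ i j (x j)) := by
  constructor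
  · rintro ⟨hm, hs⟩
    refine ⟨fun i j t => Γ (fun k => if k = j then t else 0) i, ?_, ?_⟩
    · intro i j t₁ t₂ ht
      refine hm (fun k => ?_) i
      by_cases h : k = j <;> simp [h, ht]
    · intro x i
      have hx : x = Finset.univ.sup (fun j => fun k => if k = j then x j else 0) := by
        funext k
        rw [Finset.sup_apply]
        refine le_antisymm ?_ ?_
        · exact le_trans (by simp) (Finset.le_sup (f := fun j => if k = j then x j else 0)
            (Finset.mem_univ k))
        · exact Finset.sup_le fun j _ => by by_cases h : k = j <;> simp [h]
      conv_lhs => rw [hx]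
      rw [sup_comm_aux hs Finset.univ (Finset.univ_nonempty_iff.mpr ⟨⟨0, hn⟩⟩) _,
        Finset.sup_apply]
  · rintro ⟨γ, hmono, hΓ⟩
    constructor
    · intro x y hxy
      intro i
      rw [hΓ, hΓ]
      exact Finset.sup_mono_fun fun j _ => hmono i j (hxy j)
    · intro x y
      funext i
      rw [Pi.sup_apply, hΓ, hΓ, hΓ]
      rw [← Finset.sup_sup]
      refine Finset.sup_congr rfl fun j _ => ?_
      simp [Pi.sup_apply, (hmono i j).map_max]
end

section
/- Let Γ : ℝ≥0^n → ℝ≥0^n be a MAX-preserving map with Γ_i(x) = max_j γ_{i,j}(x_j) for non-decreasing continuous functions γ_{i,j} with γ_{i,j}(0)=0, which satisfies the cyclic small-gain conditions. Then Γ(Q(x)) ≤ Q(x) and Q(x) ≥ x for all x ∈ ℝ≥0^n, where Q(x) = MAX{x, Γ(x), Γ^(2)(x), …, Γ^(n-1)(x)}. -/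
open scoped NNReal

/-- The composition `γ_{i₁,i₂} ∘ γ_{i₂,i₃} ∘ ⋯ ∘ γ_{i_r,i₁}` along the cycle
given by the list `l = [i₁, …, i_r]`. -/
def cycleGain {n : ℕ} (γ : Fin n → Fin n → ℝ≥0 → ℝ≥0) (l : List (Fin n)) :
    ℝ≥0 → ℝ≥0 :=
  ((l.zip (l.rotate 1)).map fun p => γ p.1 p.2).foldr (· ∘ ·) id

/-- `γ` satisfies the cyclic small-gain conditions: the gain along every cycle of
pairwise distinct indices (including the trivial cycles `γ_{i,i}`) is strictly
below the identity on `(0,∞)`. -/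
def CyclicSmallGain {n : ℕ} (γ : Fin n → Fin n → ℝ≥0 → ℝ≥0) : Prop :=
  ∀ l : List (Fin n), l.Nodup → l ≠ [] → ∀ s : ℝ≥0, 0 < s → cycleGain γ l s < s

/-!
`Γ^[k] x i₀` is the largest value `γ i₀ i₁ (γ i₁ i₂ (⋯ γ i_{k-1} i_k (x i_k)))` over all walks
`i₀ i₁ ⋯ i_k`. A walk with more than `n` vertices repeats one, and so contains a cycle of
pairwise distinct vertices; by the small-gain condition that cycle does not increase the value,
so cutting it out gives a shorter walk with the same start and at least the same value. Hence
every `Γ^[k] x` is bounded by `Q x`. Since `Γ` commutes with finite maxima, `Γ (Q x)` is the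
maximum of the `Γ^[k+1] x` for `k < n`, which is therefore also bounded by `Q x`.
-/

theorem List.exists_eq_append_cons_append_cons_of_not_nodup {α : Type*} {l : List α}
    (hl : ¬ l.Nodup) : ∃ a v b c, l = a ++ v :: b ++ v :: c ∧ (v :: b).Nodup := by
  induction l with
  | nil => exact absurd List.nodup_nil hl
  | cons h t ih =>
    by_cases ht : t.Nodup
    · have hh : h ∈ t := by
        by_contra hh
        exact hl (List.nodup_cons.2 ⟨hh, ht⟩)
      obtain ⟨b, c, rfl⟩ := List.append_of_mem hh
      exact ⟨[], h, b, c, rfl,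
        (List.nodup_middle.1 ht).sublist ((List.sublist_append_left b c).cons_cons h)⟩
    · obtain ⟨a, v, b, c, rfl, hvb⟩ := ih ht
      exact ⟨h :: a, v, b, c, rfl, hvb⟩

namespace SmallGain

variable {n : ℕ} (γ : Fin n → Fin n → ℝ≥0 → ℝ≥0)

/-- `pathGain γ [i₁, …, i_r] v = γ i₁ i₂ ∘ ⋯ ∘ γ i_{r-1} i_r ∘ γ i_r v`. -/
def pathGain : List (Fin n) → Fin n → ℝ≥0 → ℝ≥0
  | [], _ => id
  | i :: a, v => γ i (a.headD v) ∘ pathGain a v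

/-- The contribution `γ i₀ i₁ (γ i₁ i₂ (⋯ (x i_k)))` of the walk `[i₀, …, i_k]` to
`Γ^[k] x i₀`. -/
def walkValue (x : Fin n → ℝ≥0) : List (Fin n) → ℝ≥0
  | [] => 0
  | [i] => x i
  | i :: j :: l => γ i j (walkValue x (j :: l))

def gainOperator (x : Fin n → ℝ≥0) (i : Fin n) : ℝ≥0 :=
  Finset.univ.sup fun j => γ i j (x j)

variable {γ}

theorem pathGain_monotone (hmono : ∀ i j, Monotone (γ i j)) :
    ∀ a v, Monotone (pathGain γ a v)
  | [], _ => monotone_id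
  | _ :: a, v => (hmono _ _).comp (pathGain_monotone hmono a v)

theorem pathGain_zero (hzero : ∀ i j, γ i j 0 = 0) : ∀ a v, pathGain γ a v 0 = 0
  | [], _ => rfl
  | _ :: a, v => by simp only [pathGain, Function.comp_apply, pathGain_zero hzero a v, hzero]

theorem walkValue_append_cons (x : Fin n → ℝ≥0) (a : List (Fin n)) (v : Fin n)
    (r : List (Fin n)) :
    walkValue γ x (a ++ v :: r) = pathGain γ a v (walkValue γ x (v :: r)) := by
  induction a with
  | nil => rfl
  | cons i a ih =>
    cases a with
    | nil => rfl
    | cons j a => simp only [List.cons_append] at ih ⊢; simp [walkValue, pathGain, ih]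

theorem cycleGain_cons (v : Fin n) (b : List (Fin n)) :
    cycleGain γ (v :: b) = pathGain γ (v :: b) v := by
  suffices h : ∀ (l : List (Fin n)) (i : Fin n),
      (((i :: l).zip (l ++ [v])).map fun p => γ p.1 p.2).foldr (· ∘ ·) id =
        pathGain γ (i :: l) v by
    simpa [cycleGain, List.rotate_cons_succ] using h b v
  intro l
  induction l with
  | nil => intro i; rfl
  | cons j l ih => intro i; simp only [List.cons_append, List.zip_cons_cons, List.map_cons,
      List.foldr_cons, ih j, pathGain, List.headD_cons]

theorem pathGain_cycle_le (hzero : ∀ i j, γ i j 0 = 0) (hsg : CyclicSmallGain γ)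
    {v : Fin n} {b : List (Fin n)} (hvb : (v :: b).Nodup) (s : ℝ≥0) :
    pathGain γ (v :: b) v s ≤ s := by
  rcases eq_zero_or_pos s with rfl | hs
  · exact (pathGain_zero hzero _ _).le
  · rw [← cycleGain_cons]
    exact (hsg _ hvb (List.cons_ne_nil v b) s hs).le

theorem walkValue_le_of_cycle_removed (hmono : ∀ i j, Monotone (γ i j))
    (hzero : ∀ i j, γ i j 0 = 0) (hsg : CyclicSmallGain γ) (x : Fin n → ℝ≥0)
    {a : List (Fin n)} {v : Fin n} {b : List (Fin n)} (c : List (Fin n)) (hvb : (v :: b).Nodup) :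
    walkValue γ x (a ++ v :: b ++ v :: c) ≤ walkValue γ x (a ++ v :: c) := by
  rw [List.append_assoc, List.cons_append, walkValue_append_cons, walkValue_append_cons,
    ← List.cons_append, walkValue_append_cons]
  exact pathGain_monotone hmono a v (pathGain_cycle_le hzero hsg hvb _)

theorem exists_length_le_walkValue_ge (hmono : ∀ i j, Monotone (γ i j))
    (hzero : ∀ i j, γ i j 0 = 0) (hsg : CyclicSmallGain γ) (x : Fin n → ℝ≥0)
    (p : List (Fin n)) :
    ∃ p' : List (Fin n), p'.length ≤ n ∧ p'.head? = p.head? ∧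
      walkValue γ x p ≤ walkValue γ x p' := by
  by_cases hp : p.Nodup
  · exact ⟨p, by simpa using hp.length_le_card, rfl, le_rfl⟩
  · obtain ⟨a, v, b, c, hpeq, hvb⟩ := List.exists_eq_append_cons_append_cons_of_not_nodup hp
    obtain ⟨p', hlen, hhead, hle⟩ :=
      exists_length_le_walkValue_ge hmono hzero hsg x (a ++ v :: c)
    subst hpeq
    refine ⟨p', hlen, ?_, (walkValue_le_of_cycle_removed hmono hzero hsg x c hvb).trans hle⟩
    cases a <;> simpa using hhead
termination_by p.length
decreasing_by subst hpeq; simp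

theorem walkValue_le_iterate (hmono : ∀ i j, Monotone (γ i j)) (x : Fin n → ℝ≥0)
    (i : Fin n) (l : List (Fin n)) :
    walkValue γ x (i :: l) ≤ (gainOperator γ)^[l.length] x i := by
  induction l generalizing i with
  | nil => rfl
  | cons j l ih =>
    rw [List.length_cons, Function.iterate_succ_apply']
    exact (hmono i j (ih j)).trans
      (Finset.le_sup (f := fun j => γ i j ((gainOperator γ)^[l.length] x j)) (Finset.mem_univ j))

theorem exists_walkValue_eq_iterate (x : Fin n → ℝ≥0) (k : ℕ) (i : Fin n) :
    ∃ l : List (Fin n), l.length = k ∧ (gainOperator γ)^[k] x i = walkValue γ x (i :: l) := by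
  induction k generalizing i with
  | zero => exact ⟨[], rfl, rfl⟩
  | succ k ih =>
    obtain ⟨j, -, hj⟩ := Finset.exists_mem_eq_sup Finset.univ ⟨i, Finset.mem_univ i⟩
      fun j => γ i j ((gainOperator γ)^[k] x j)
    obtain ⟨l, rfl, hl⟩ := ih j
    refine ⟨j :: l, rfl, ?_⟩
    rw [Function.iterate_succ_apply', gainOperator, hj, hl]
    rfl

theorem iterate_le_sup_range (hmono : ∀ i j, Monotone (γ i j)) (hzero : ∀ i j, γ i j 0 = 0)
    (hsg : CyclicSmallGain γ) (x : Fin n → ℝ≥0) (k : ℕ) :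
    (gainOperator γ)^[k] x ≤ (Finset.range n).sup fun m => (gainOperator γ)^[m] x := by
  intro i
  obtain ⟨l, -, hl⟩ := exists_walkValue_eq_iterate x k i
  obtain ⟨p, hlen, hhead, hle⟩ := exists_length_le_walkValue_ge hmono hzero hsg x (i :: l)
  obtain ⟨l', rfl⟩ : ∃ l', p = i :: l' := ⟨p.tail, List.eq_cons_of_mem_head? hhead⟩
  rw [hl, Finset.sup_apply]
  calc walkValue γ x (i :: l)
      ≤ walkValue γ x (i :: l') := hle
    _ ≤ (gainOperator γ)^[l'.length] x i := walkValue_le_iterate hmono x i l'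
    _ ≤ _ := Finset.le_sup (f := fun m => (gainOperator γ)^[m] x i)
        (Finset.mem_range.2 (by simpa using hlen))

theorem gainOperator_sup (hmono : ∀ i j, Monotone (γ i j)) (x y : Fin n → ℝ≥0) :
    gainOperator γ (x ⊔ y) = gainOperator γ x ⊔ gainOperator γ y := by
  funext i
  simp only [gainOperator, Pi.sup_apply, (hmono _ _).map_sup, ← Finset.sup_sup]
  rfl

theorem gainOperator_bot (hzero : ∀ i j, γ i j 0 = 0) : gainOperator γ ⊥ = ⊥ := by
  funext i
  simp [gainOperator, hzero]

end SmallGain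

open SmallGain

theorem gamma_Q_le_Q_general {n : ℕ}
    (γ : Fin n → Fin n → ℝ≥0 → ℝ≥0)
    (hmono : ∀ i j, Monotone (γ i j))
    (hzero : ∀ i j, γ i j 0 = 0)
    (Γ : (Fin n → ℝ≥0) → (Fin n → ℝ≥0))
    (hΓ : ∀ x i, Γ x i = Finset.univ.sup fun j : Fin n => γ i j (x j))
    (hsg : CyclicSmallGain γ)
    (Q : (Fin n → ℝ≥0) → (Fin n → ℝ≥0))
    (hQ : ∀ x, Q x = (Finset.range n).sup fun k => Γ^[k] x) :
    ∀ x : Fin n → ℝ≥0, Γ (Q x) ≤ Q x ∧ x ≤ Q x := by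
  obtain rfl : Γ = gainOperator γ := funext fun x => funext (hΓ x)
  obtain rfl : Q = fun x => (Finset.range n).sup fun k => (gainOperator γ)^[k] x := funext hQ
  intro x
  refine ⟨?_, iterate_le_sup_range hmono hzero hsg x 0⟩
  rw [Finset.apply_sup_eq_sup_comp _ (gainOperator_sup hmono) (gainOperator_bot hzero)]
  refine Finset.sup_le fun k _ => ?_
  simpa only [Function.comp_apply, ← Function.iterate_succ_apply']
    using iterate_le_sup_range hmono hzero hsg x (k + 1)

theorem gamma_Q_le_Q {n : ℕ} (hn : 0 < n)
    (γ : Fin n → Fin n → ℝ≥0 → ℝ≥0)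
    (hmono : ∀ i j, Monotone (γ i j)) (hcont : ∀ i j, Continuous (γ i j))
    (hzero : ∀ i j, γ i j 0 = 0)
    (Γ : (Fin n → ℝ≥0) → (Fin n → ℝ≥0))
    (hΓ : ∀ x i, Γ x i = Finset.univ.sup fun j : Fin n => γ i j (x j))
    (hsg : CyclicSmallGain γ)
    (Q : (Fin n → ℝ≥0) → (Fin n → ℝ≥0))
    (hQ : ∀ x, Q x = (Finset.range n).sup fun k => Γ^[k] x) :
    ∀ x : Fin n → ℝ≥0, Γ (Q x) ≤ Q x ∧ x ≤ Q x :=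
  gamma_Q_le_Q_general γ hmono hzero Γ hΓ hsg Q hQ
end

section
/- Let Γ : ℝ≥0^n → ℝ≥0^n be a MAX-preserving map, built from non-decreasing functions γ_{i,j} with γ_{i,j}(0)=0 via Γ_i(x)=max_j γ_{i,j}(x_j), satisfying the cyclic small-gain conditions. If x, y ∈ ℝ≥0^n satisfy x ≤ MAX{y, Γ(x)} (componentwise), then x ≤ Q(y), where Q(y) = MAX{y, Γ(y), Γ^(2)(y), …, Γ^(n-1)(y)}. -/
open scoped NNReal

/-!
Suppose `x i₀ > Q y i₀` and follow a chain `i₀ → i₁ → ⋯` of pairwise distinct indices with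
`x p ≤ γ p q (x q)` on every link. Such a chain has `k < n` links, so `x ≤ y` at its end would give
`x i₀ ≤ Γ^[k] y i₀ ≤ Q y i₀`. Hence `y < x` at the end, so `x` is positive there and `x ≤ Γ x`,
and an index attaining `Γ x = max_j γ _ j (x j)` extends the chain. By finiteness the chain
eventually revisits one of its indices, closing a cycle `c` of distinct indices through some `a`,
with `0 < x a ≤ cycleGain γ c (x a)`, against the small-gain condition.
-/

namespace List

variable {ι : Type*}

theorem exists_nodup_cycle_of_chain_extends [Fintype ι] {R : ι → ι → Prop} {i₀ : ι}
    (hext : ∀ t : List ι, (i₀ :: t).Nodup → (i₀ :: t).IsChain R →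
      ∃ j, R ((i₀ :: t).getLast (cons_ne_nil _ _)) j)
    (t : List ι) (hnd : (i₀ :: t).Nodup) (hc : (i₀ :: t).IsChain R) :
    ∃ a s, (a :: s).Nodup ∧ (a :: s ++ [a]).IsChain R := by
  obtain ⟨j, hj⟩ := hext t hnd hc
  have hcj : (i₀ :: t ++ [j]).IsChain R :=
    hc.append (isChain_singleton j) (by simpa [getLast?_eq_some_getLast (cons_ne_nil i₀ t)])
  by_cases hjt : j ∈ i₀ :: t
  · obtain ⟨u, v, huv⟩ := append_of_mem hjt
    refine ⟨j, v, (huv ▸ hnd).sublist (sublist_append_right u _), ?_⟩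
    rw [huv, append_assoc] at hcj
    exact hcj.right_of_append
  · have hnd' : (i₀ :: (t ++ [j])).Nodup := by
      rw [← cons_append]
      exact hnd.append (nodup_singleton j) (by simpa using hjt)
    exact exists_nodup_cycle_of_chain_extends hext (t ++ [j]) hnd' hcj
termination_by Fintype.card ι - t.length
decreasing_by
  have := hnd'.length_le_card
  simp only [length_cons, length_append, length_nil] at this ⊢
  omega

end List

section PathGain

variable {ι α : Type*}

def pathGain (γ : ι → ι → α → α) : ι → List ι → α → α
  | _, [] => id
  | i, j :: t => γ i j ∘ pathGain γ j t

theorem foldr_zip_eq_pathGain (γ : ι → ι → α → α) (i b : ι) (t : List ι) :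
    (((i :: t).zip (t ++ [b])).map fun p => γ p.1 p.2).foldr (· ∘ ·) id =
      pathGain γ i (t ++ [b]) := by
  induction t generalizing i with
  | nil => rfl
  | cons j t ih => simp [ih, pathGain]

variable [Preorder α] {γ : ι → ι → α → α}

theorem pathGain_mono (hmono : ∀ i j, Monotone (γ i j)) (i : ι) (t : List ι) :
    Monotone (pathGain γ i t) := by
  induction t generalizing i with
  | nil => exact monotone_id
  | cons j t ih => exact (hmono i j).comp (ih j)

theorem le_pathGain_of_isChain (hmono : ∀ i j, Monotone (γ i j)) {x : ι → α} {i : ι}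
    {t : List ι} (hc : (i :: t).IsChain fun p q => x p ≤ γ p q (x q)) :
    x i ≤ pathGain γ i t (x ((i :: t).getLast (List.cons_ne_nil i t))) := by
  induction t generalizing i with
  | nil => exact le_rfl
  | cons j t ih =>
    rw [List.isChain_cons_cons] at hc
    exact hc.1.trans (hmono i j (ih hc.2))

theorem pathGain_le_iterate (hmono : ∀ i j, Monotone (γ i j)) {Γ : (ι → α) → ι → α}
    (hΓ : ∀ z i j, γ i j (z j) ≤ Γ z i) (y : ι → α) (i : ι) (t : List ι) :
    pathGain γ i t (y ((i :: t).getLast (List.cons_ne_nil i t))) ≤ Γ^[t.length] y i := by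
  induction t generalizing i with
  | nil => exact le_rfl
  | cons j t ih =>
    rw [List.length_cons, Function.iterate_succ_apply']
    exact (hmono i j (ih j)).trans (hΓ _ i j)

theorem le_iterate_of_isChain (hmono : ∀ i j, Monotone (γ i j)) {Γ : (ι → α) → ι → α}
    (hΓ : ∀ z i j, γ i j (z j) ≤ Γ z i) {x y : ι → α} {i : ι} {t : List ι}
    (hc : (i :: t).IsChain fun p q => x p ≤ γ p q (x q))
    (hlast : x ((i :: t).getLast (List.cons_ne_nil i t)) ≤
      y ((i :: t).getLast (List.cons_ne_nil i t))) :
    x i ≤ Γ^[t.length] y i :=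
  calc x i ≤ _ := le_pathGain_of_isChain hmono hc
    _ ≤ _ := pathGain_mono hmono i t hlast
    _ ≤ _ := pathGain_le_iterate hmono hΓ y i t

end PathGain

theorem cycleGain_eq_pathGain {n : ℕ} (γ : Fin n → Fin n → ℝ≥0 → ℝ≥0) (a : Fin n)
    (s : List (Fin n)) : cycleGain γ (a :: s) = pathGain γ a (s ++ [a]) := by
  rw [cycleGain, List.rotate_cons_succ, List.rotate_zero, foldr_zip_eq_pathGain]

theorem exists_pos_le_gain_of_isChain {ι : Type*} [Fintype ι] {γ : ι → ι → ℝ≥0 → ℝ≥0}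
    (hmono : ∀ i j, Monotone (γ i j)) {Γ : (ι → ℝ≥0) → ι → ℝ≥0}
    (hΓ : ∀ z i, Γ z i = Finset.univ.sup fun j => γ i j (z j)) {x y : ι → ℝ≥0}
    (hxy : x ≤ y ⊔ Γ x) {i₀ : ι} {t : List ι}
    (hc : (i₀ :: t).IsChain fun p q => x p ≤ γ p q (x q)) (hi₀ : ¬x i₀ ≤ Γ^[t.length] y i₀) :
    ∃ j, 0 < x ((i₀ :: t).getLast (List.cons_ne_nil _ _)) ∧
      x ((i₀ :: t).getLast (List.cons_ne_nil _ _)) ≤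
        γ ((i₀ :: t).getLast (List.cons_ne_nil _ _)) j (x j) := by
  set i := (i₀ :: t).getLast (List.cons_ne_nil _ _)
  have hΓle (z : ι → ℝ≥0) (i j : ι) : γ i j (z j) ≤ Γ z i := by
    rw [hΓ]
    exact Finset.le_sup (f := fun j => γ i j (z j)) (Finset.mem_univ j)
  have hyi : y i < x i := lt_of_not_ge fun hxi => hi₀ (le_iterate_of_isChain hmono hΓle hc hxi)
  have hpos : 0 < x i := hyi.trans_le' bot_le
  have hxΓ : x i ≤ Γ x i := (le_sup_iff.1 (hxy i)).resolve_left hyi.not_ge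
  rw [hΓ, Finset.le_sup_iff hpos] at hxΓ
  obtain ⟨j, -, hj⟩ := hxΓ
  exact ⟨j, hpos, hj⟩

theorem le_Q_of_le_max_gamma_general {n : ℕ}
    (γ : Fin n → Fin n → ℝ≥0 → ℝ≥0)
    (hmono : ∀ i j, Monotone (γ i j))
    (Γ : (Fin n → ℝ≥0) → (Fin n → ℝ≥0))
    (hΓ : ∀ x i, Γ x i = Finset.univ.sup fun j : Fin n => γ i j (x j))
    (hsg : CyclicSmallGain γ)
    (Q : (Fin n → ℝ≥0) → (Fin n → ℝ≥0))
    (hQ : ∀ z, Q z = (Finset.range n).sup fun k => Γ^[k] z)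
    (x y : Fin n → ℝ≥0) (hxy : x ≤ y ⊔ Γ x) :
    x ≤ Q y := by
  intro i₀
  by_contra hi₀
  have hiterate_le {k : ℕ} (hk : k < n) : Γ^[k] y i₀ ≤ Q y i₀ := by
    rw [hQ, Finset.sup_apply]
    exact Finset.le_sup (f := fun k => Γ^[k] y i₀) (Finset.mem_range.2 hk)
  obtain ⟨a, s, hnd, hcyc⟩ :=
    List.exists_nodup_cycle_of_chain_extends (R := fun p q => 0 < x p ∧ x p ≤ γ p q (x q))
      (fun t hnd hc => exists_pos_le_gain_of_isChain hmono hΓ hxy (hc.imp fun _ _ => And.right)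
        fun h => hi₀ (h.trans (hiterate_le (by simpa using hnd.length_le_card))))
      [] (List.nodup_singleton i₀) (List.isChain_singleton i₀)
  have hpos : 0 < x a := (hcyc.rel_head? (List.head_mem_head? (List.concat_ne_nil a s))).1
  have hle : x a ≤ cycleGain γ (a :: s) (x a) := by
    rw [cycleGain_eq_pathGain]
    simpa using le_pathGain_of_isChain hmono (hcyc.imp fun _ _ => And.right)
  exact (hle.trans_lt (hsg _ hnd (List.cons_ne_nil a s) _ hpos)).false

theorem le_Q_of_le_max_gamma {n : ℕ} (hn : 0 < n)
    (γ : Fin n → Fin n → ℝ≥0 → ℝ≥0)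
    (hmono : ∀ i j, Monotone (γ i j)) (hzero : ∀ i j, γ i j 0 = 0)
    (Γ : (Fin n → ℝ≥0) → (Fin n → ℝ≥0))
    (hΓ : ∀ x i, Γ x i = Finset.univ.sup fun j : Fin n => γ i j (x j))
    (hsg : CyclicSmallGain γ)
    (Q : (Fin n → ℝ≥0) → (Fin n → ℝ≥0))
    (hQ : ∀ z, Q z = (Finset.range n).sup fun k => Γ^[k] z)
    (x y : Fin n → ℝ≥0) (hxy : x ≤ y ⊔ Γ x) :
    x ≤ Q y :=
  le_Q_of_le_max_gamma_general γ hmono Γ hΓ hsg Q hQ x y hxy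
end

section
/- For n = 2, let γ_{1,2}, γ_{2,1} : ℝ≥0 → ℝ≥0 be continuous non-decreasing functions with value 0 at 0, and γ_{1,1} = γ_{2,2} ≡ 0. If γ_{1,2}(γ_{2,1}(s)) < s for all s > 0, then the MAX-preserving map Γ(x_1,x_2) = (γ_{1,2}(x_2), γ_{2,1}(x_1)) satisfies: every solution of the discrete-time system x(k+1) = Γ(x(k)) with x(0) ∈ ℝ≥0^2 converges to (0,0) as k → ∞. -/
/-
Γ ∘ Γ acts coordinatewise, as γ₁₂ ∘ γ₂₁ on the first and γ₂₁ ∘ γ₁₂ on the second coordinate,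
and both maps lie strictly below the identity on (0, ∞): the first by assumption, the second
because γ₂₁ (γ₁₂ s) ≥ s would give γ₁₂ (γ₂₁ (γ₁₂ s)) ≥ γ₁₂ s by monotonicity of γ₁₂. The
iterates of a continuous self-map of ℝ≥0 lying below the identity decrease to a fixed point,
which must be 0. So every orbit of Γ ∘ Γ, in particular the one through Γ x(0), tends to 0,
and the even and odd parts of the orbit of x(0) are of this form.
-/

open scoped NNReal

open Filter Function Topology

theorem Function.tendsto_iterate_of_tendsto_iterate_iterate {α : Type*} {T : α → α}
    {l : Filter α} {n : ℕ} (hn : 0 < n)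
    (h : ∀ x, Tendsto (fun m => (T^[n])^[m] x) atTop l) (x : α) :
    Tendsto (fun k => T^[k] x) atTop l := by
  refine fun U hU => mem_map.2 ?_
  have hres : ∀ᶠ m in atTop, ∀ r ∈ Finset.range n, (T^[n])^[m] (T^[r] x) ∈ U :=
    (eventually_all_finset _).2 fun r _ => h _ hU
  obtain ⟨N, hN⟩ := eventually_atTop.1 hres
  filter_upwards [eventually_ge_atTop (n * N)] with k hk
  have hkN : N ≤ k / n := (Nat.le_div_iff_mul_le hn).2 (by rwa [mul_comm])
  have := hN (k / n) hkN (k % n) (Finset.mem_range.2 (Nat.mod_lt k hn))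
  rwa [← iterate_mul, ← iterate_add_apply, Nat.div_add_mod] at this

namespace NNReal

theorem le_self_of_forall_pos_lt_self {f : ℝ≥0 → ℝ≥0} (hc : Continuous f)
    (hf : ∀ s, 0 < s → f s < s) (s : ℝ≥0) : f s ≤ s := by
  rcases (zero_le (a := s)).eq_or_lt with rfl | hs
  · exact le_of_tendsto_of_tendsto (b := 𝓝[>] 0) ((hc.tendsto 0).mono_left nhdsWithin_le_nhds)
      nhdsWithin_le_nhds (eventually_nhdsWithin_of_forall fun s hs => (hf s hs).le)
  · exact (hf s hs).le

theorem tendsto_iterate_zero_of_forall_pos_lt_self {f : ℝ≥0 → ℝ≥0} (hc : Continuous f)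
    (hf : ∀ s, 0 < s → f s < s) (t : ℝ≥0) :
    Tendsto (fun m => f^[m] t) atTop (𝓝 0) := by
  have hanti : Antitone fun m => f^[m] t := antitone_nat_of_succ_le fun m => by
    rw [iterate_succ_apply']
    exact le_self_of_forall_pos_lt_self hc hf _
  have hlim := tendsto_atTop_ciInf hanti (OrderBot.bddBelow _)
  have hfix : IsFixedPt f (⨅ m, f^[m] t) := isFixedPt_of_tendsto_iterate hlim hc.continuousAt
  have hzero : ⨅ m, f^[m] t = 0 := by
    by_contra hne
    exact (hf _ (pos_iff_ne_zero.2 hne)).ne hfix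
  rwa [hzero] at hlim

theorem comp_lt_self_of_comp_lt_self {f g : ℝ≥0 → ℝ≥0} (hf : Monotone f) (hg : g 0 = 0)
    (hfg : ∀ s, 0 < s → f (g s) < s) (s : ℝ≥0) (hs : 0 < s) : g (f s) < s := by
  rcases (zero_le (a := f s)).eq_or_lt with hfs | hfs
  · rwa [← hfs, hg]
  · exact lt_of_not_ge fun hle => (hfg _ hfs).not_ge (hf hle)

end NNReal

theorem discrete_smallGain_two_dim_general
    (γ12 γ21 : ℝ≥0 → ℝ≥0)
    (hc12 : Continuous γ12) (hc21 : Continuous γ21)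
    (hm12 : Monotone γ12)
    (h021 : γ21 0 = 0)
    (hsg : ∀ s : ℝ≥0, 0 < s → γ12 (γ21 s) < s) :
    ∀ x0 : ℝ≥0 × ℝ≥0,
      Filter.Tendsto (fun k : ℕ => (fun p : ℝ≥0 × ℝ≥0 => (γ12 p.2, γ21 p.1))^[k] x0)
        Filter.atTop (nhds (0, 0)) := by
  refine tendsto_iterate_of_tendsto_iterate_iterate two_pos fun y => ?_
  have hsq : (fun p : ℝ≥0 × ℝ≥0 => (γ12 p.2, γ21 p.1))^[2] = Prod.map (γ12 ∘ γ21) (γ21 ∘ γ12) :=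
    rfl
  simp only [hsq, Prod.map_iterate]
  exact (NNReal.tendsto_iterate_zero_of_forall_pos_lt_self (hc12.comp hc21) hsg y.1).prodMk_nhds
    (NNReal.tendsto_iterate_zero_of_forall_pos_lt_self (hc21.comp hc12)
      (NNReal.comp_lt_self_of_comp_lt_self (g := γ21) hm12 h021 hsg) y.2)

/-- For `n = 2` with zero diagonal gains, the small-gain condition
`γ₁₂ ∘ γ₂₁ (s) < s` for `s > 0` implies that every solution of the discrete-time
system `x(k+1) = Γ(x(k))`, `Γ(x₁,x₂) = (γ₁₂(x₂), γ₂₁(x₁))`, converges to `(0,0)`. -/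
theorem discrete_smallGain_two_dim
    (γ12 γ21 : ℝ≥0 → ℝ≥0)
    (hc12 : Continuous γ12) (hc21 : Continuous γ21)
    (hm12 : Monotone γ12) (hm21 : Monotone γ21)
    (h012 : γ12 0 = 0) (h021 : γ21 0 = 0)
    (hsg : ∀ s : ℝ≥0, 0 < s → γ12 (γ21 s) < s) :
    ∀ x0 : ℝ≥0 × ℝ≥0,
      Filter.Tendsto (fun k : ℕ => (fun p : ℝ≥0 × ℝ≥0 => (γ12 p.2, γ21 p.1))^[k] x0)
        Filter.atTop (nhds (0, 0)) :=
  discrete_smallGain_two_dim_general γ12 γ21 hc12 hc21 hm12 h021 hsg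
end

section
/- Consider the chemostat dynamics in transformed coordinates: if y(t) ≤ 0 then ẏ(t) = a·D_s·((G·exp(−y(t))+1)/(G+1))·(1−exp(y(t))), and if y(t) > 0 then ẏ(t) = D_s·g(y(t))·(G·exp(−y(t))+1)·exp(x(t))·(1−exp(y(t))), where a, D_s, G > 0 and g(y) > 0. Then the function V(t) = y(t)² is non-increasing along any solution, and hence |y(t)| ≤ max_{θ∈[−r,0]} |y(θ)| for all t ≥ 0 in the interval of existence. -/
/-! Both branches of the vector field have the form `c · (1 − exp y)` with `c > 0`, and
`1 − exp y` has the sign opposite to `y`. Hence `d/dt (y²) = 2 y ẏ ≤ 0`, so `y²` is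
non-increasing for `t ≥ 0`, and `|y t| ≤ |y 0|` is bounded by the maximum of `|y|` over the
initial interval `[−r, 0]`. -/

open Real Set

lemma mul_mul_one_sub_exp_nonpos {c : ℝ} (hc : 0 ≤ c) (y : ℝ) : y * (c * (1 - exp y)) ≤ 0 := by
  rcases le_or_gt y 0 with hy | hy
  · have : exp y ≤ 1 := exp_le_one_iff.mpr hy
    exact mul_nonpos_of_nonpos_of_nonneg hy (mul_nonneg hc (by linarith))
  · have : 1 < exp y := one_lt_exp_iff.mpr hy
    exact mul_nonpos_of_nonneg_of_nonpos hy.le (mul_nonpos_of_nonneg_of_nonpos hc (by linarith))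

lemma antitoneOn_sq_of_mul_deriv_nonpos {D : Set ℝ} (hD : Convex ℝ D) {y y' : ℝ → ℝ}
    (hy : ∀ t ∈ D, HasDerivAt y (y' t) t) (hsign : ∀ t ∈ D, y t * y' t ≤ 0) :
    AntitoneOn (fun t => y t ^ 2) D := by
  have hsq : ∀ t ∈ D, HasDerivAt (fun t => y t ^ 2) (2 * (y t * y' t)) t := fun t ht =>
    ((hy t ht).fun_pow 2).congr_deriv (by ring)
  refine antitoneOn_of_hasDerivWithinAt_nonpos hD
    (fun t ht => (hsq t ht).continuousAt.continuousWithinAt)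
    (fun t ht => (hsq t (interior_subset ht)).hasDerivWithinAt)
    (fun t ht => ?_)
  linarith [hsign t (interior_subset ht)]

lemma abs_le_sSup_abs_image_of_isCompact {K : Set ℝ} (hK : IsCompact K) {y : ℝ → ℝ}
    (hyc : ContinuousOn y K) {s : ℝ} (hs : s ∈ K) : |y s| ≤ sSup ((fun θ => |y θ|) '' K) :=
  le_csSup (hK.image_of_continuousOn hyc.abs).bddAbove (mem_image_of_mem _ hs)

theorem chemostat_y_nonincreasing_general (a Ds G r : ℝ)
    (ha : 0 < a) (hDs : 0 < Ds) (hG : 0 < G) (hr : 0 ≤ r)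
    (g : ℝ → ℝ) (hg : ∀ s, 0 < g s)
    (x y : ℝ → ℝ) (hyc : ContinuousOn y (Set.Icc (-r) 0))
    (hy : ∀ t : ℝ, 0 ≤ t →
      HasDerivAt y
        (if y t ≤ 0 then
          a * Ds * ((G * Real.exp (-y t) + 1) / (G + 1)) * (1 - Real.exp (y t))
        else
          Ds * g (y t) * (G * Real.exp (-y t) + 1) * Real.exp (x t)
            * (1 - Real.exp (y t))) t) :
    (∀ t₁ t₂ : ℝ, 0 ≤ t₁ → t₁ ≤ t₂ → (y t₂) ^ 2 ≤ (y t₁) ^ 2) ∧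
      ∀ t : ℝ, 0 ≤ t → |y t| ≤ sSup ((fun θ => |y θ|) '' Set.Icc (-r) 0) := by
  have hanti := antitoneOn_sq_of_mul_deriv_nonpos (convex_Ici 0) hy fun t _ => by
    have := hg (y t)
    split_ifs <;> exact mul_mul_one_sub_exp_nonpos (by positivity) (y t)
  have hmono : ∀ t₁ t₂ : ℝ, 0 ≤ t₁ → t₁ ≤ t₂ → (y t₂) ^ 2 ≤ (y t₁) ^ 2 :=
    fun t₁ t₂ h₁ h₁₂ => hanti h₁ (h₁.trans h₁₂) h₁₂
  refine ⟨hmono, fun t ht => ?_⟩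
  calc |y t| ≤ |y 0| := sq_le_sq.mp (hmono 0 t le_rfl ht)
    _ ≤ _ := abs_le_sSup_abs_image_of_isCompact isCompact_Icc hyc ⟨by linarith, le_rfl⟩

/-- Along the transformed chemostat dynamics, `V(t) = y(t)²` is non-increasing
for `t ≥ 0`, hence `|y(t)| ≤ max_{θ ∈ [−r,0]} |y(θ)|` for all `t ≥ 0`. -/
theorem chemostat_y_nonincreasing (a Ds G r : ℝ)
    (ha : 0 < a) (hDs : 0 < Ds) (hG : 0 < G) (hr : 0 ≤ r)
    (g : ℝ → ℝ) (hg : ∀ s, 0 < g s) (hgc : Continuous g)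
    (x y : ℝ → ℝ) (hyc : ContinuousOn y (Set.Icc (-r) 0))
    (hy : ∀ t : ℝ, 0 ≤ t →
      HasDerivAt y
        (if y t ≤ 0 then
          a * Ds * ((G * Real.exp (-y t) + 1) / (G + 1)) * (1 - Real.exp (y t))
        else
          Ds * g (y t) * (G * Real.exp (-y t) + 1) * Real.exp (x t)
            * (1 - Real.exp (y t))) t) :
    (∀ t₁ t₂ : ℝ, 0 ≤ t₁ → t₁ ≤ t₂ → (y t₂) ^ 2 ≤ (y t₁) ^ 2) ∧
      ∀ t : ℝ, 0 ≤ t → |y t| ≤ sSup ((fun θ => |y θ|) '' Set.Icc (-r) 0) :=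
  chemostat_y_nonincreasing_general a Ds G r ha hDs hG hr g hg x y hyc hy
end
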